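/- arXiv:1805.10070 — 4 statements merged into one kernel-verified Lean document; each statement's English description precedes it below -/
import Mathlib

section
/- Let P be an ordered set of strings. The map Dec_Pre is a bijection from Decomp_BWT(P) onto Prefix(←P.S), the set of all prefixes (including the empty string) of the reversed strings of P.S. -/
namespace BwtXbw

variable {α β : Type*}

/-- An ordered set of strings: a nonempty list of distinct nonempty strings over `α`
(the list order is the enumeration `t_1, …, t_n`). -/
structure OSS (α : Type*) where
  strs : List (List α)
  strs_ne : strs ≠ []
  nodup : strs.Nodup
  mem_ne : ∀ s ∈ strs, s ≠ []

/-- Embed a symbol of `α` into `WithBot α`; `⊥` plays the role of the separator `$`,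
which is smaller than every symbol of the alphabet. -/
def sym (a : α) : WithBot α := (a : WithBot α)

/-- The multi-string `m_P = t_1 $ t_2 $ ⋯ $ t_n $` over `WithBot α`. -/
def mP (P : OSS α) : List (WithBot α) :=
  (P.strs.map (fun s => s.map sym ++ [⊥])).flatten

/-- `SA` is a (0-based) suffix array for `m`: a bijection of `[0, |m|)` onto itself
listing the suffixes of `m` in increasing lexicographic order. -/
def IsSuffixArray [LinearOrder α] (m : List (WithBot α)) (SA : ℕ → ℕ) : Prop :=
  Set.BijOn SA (Set.Iio m.length) (Set.Iio m.length) ∧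
  ∀ i j : ℕ, i < j → j < m.length →
    List.Lex (· < ·) (m.drop (SA i)) (m.drop (SA j))

/-- `LRS(P)[i]` (0-based): number of symbols of `m` from position `SA i` up to (but not
including) the first separator at or after position `SA i`. -/
def lrs [LinearOrder α] (m : List (WithBot α)) (SA : ℕ → ℕ) (i : ℕ) : ℕ :=
  ((m.drop (SA i)).takeWhile (fun c => decide (c ≠ ⊥))).length

/-- Length of the longest common prefix of two lists. -/
def lcpLen [DecidableEq β] : List β → List β → ℕ
  | a :: s, b :: t => if a = b then lcpLen s t + 1 else 0
  | _, _ => 0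

/-- `LCP(P)[i] = min(LCP(m_P)[i], LRS(P)[i])` (0-based; `0` at `i = 0`). -/
def lcpP [LinearOrder α] (m : List (WithBot α)) (SA : ℕ → ℕ) (i : ℕ) : ℕ :=
  if i = 0 then 0
  else min (lcpLen (m.drop (SA (i - 1))) (m.drop (SA i))) (lrs m SA i)

/-- `Decomp_BWT(P)`: the maximal integer intervals `[u.1, u.2] ⊆ [0, |m|)` such that
`LCP(P)[k] = LRS(P)[k]` for every interior position `k ∈ [u.1+1, u.2]`. -/
def DecompBWT [LinearOrder α] (m : List (WithBot α)) (SA : ℕ → ℕ) : Set (ℕ × ℕ) :=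
  { u | u.1 ≤ u.2 ∧ u.2 < m.length ∧
        (∀ k, u.1 < k → k ≤ u.2 → lcpP m SA k = lrs m SA k) ∧
        (u.1 = 0 ∨ lcpP m SA u.1 ≠ lrs m SA u.1) ∧
        (u.2 + 1 = m.length ∨ lcpP m SA (u.2 + 1) ≠ lrs m SA (u.2 + 1)) }

/-- `Dec_Pre[u]`: the reverse of `m[SA u.1 .. SA u.1 + LRS[u.1] − 1]`. -/
def decPre [LinearOrder α] (m : List (WithBot α)) (SA : ℕ → ℕ) (u : ℕ × ℕ) :
    List (WithBot α) :=
  ((m.drop (SA u.1)).take (lrs m SA u.1)).reverse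

/-- `Prefix(←P.S)`: all prefixes (including the empty string) of the reversed strings of
`P.S`, viewed inside `WithBot α`. -/
def revPrefixes (P : OSS α) : Set (List (WithBot α)) :=
  { p | ∃ s ∈ P.strs, p <+: s.reverse.map sym }

/-- `Prefix(P.S)`: all prefixes (including the empty string) of the strings of `P.S`,
viewed inside `WithBot α`. -/
def fwdPrefixes (P : OSS α) : Set (List (WithBot α)) :=
  { p | ∃ s ∈ P.strs, p <+: s.map sym }

/-- `BWT(P)[i]` (0-based): `m[SA i − 1]` if `SA i > 0`, and the last symbol `$ = ⊥`
of `m` otherwise. -/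
def bwtArr (m : List (WithBot α)) (SA : ℕ → ℕ) (i : ℕ) : WithBot α :=
  if SA i = 0 then ⊥ else m.getD (SA i - 1) ⊥

/-- `C[c]`: the number of positions of `m` holding a symbol strictly smaller than `c`. -/
def Cfun [LinearOrder α] (m : List (WithBot α)) (c : WithBot α) : ℕ :=
  (m.filter (fun b => decide (b < c))).length

/-- The Last-to-First mapping (0-based):
`LF[i] = C[BWT[i]] + #{k < i : BWT[k] = BWT[i]}`. -/
def LF [LinearOrder α] (m : List (WithBot α)) (SA : ℕ → ℕ) (i : ℕ) : ℕ :=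
  Cfun m (bwtArr m SA i) +
    ((List.range i).filter (fun k => decide (bwtArr m SA k = bwtArr m SA i))).length

/-- The arc set `A_T(P)` on `Decomp_BWT(P)`. -/
def AT [LinearOrder α] (m : List (WithBot α)) (SA : ℕ → ℕ) :
    Set ((ℕ × ℕ) × (ℕ × ℕ)) :=
  { uv | uv.1 ∈ DecompBWT m SA ∧ uv.2 ∈ DecompBWT m SA ∧
      ∃ x, uv.1.1 ≤ x ∧ x ≤ uv.1.2 ∧ bwtArr m SA x ≠ ⊥ ∧
        uv.2.1 ≤ LF m SA x ∧ LF m SA x ≤ uv.2.2 }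

/-- Arc relation of the Aho–Corasick tree on the vertex set `Pref`:
`p` is the longest proper prefix of `q` belonging to `Pref`. -/
def ACTedge (Pref : Set (List β)) (p q : List β) : Prop :=
  p ∈ Pref ∧ q ∈ Pref ∧ p ≠ q ∧ p <+: q ∧
    ∀ r ∈ Pref, r ≠ q → r <+: q → r.length ≤ p.length

/-- `k` is a failure candidate for the position `i`: `k < i` and
`LRS[k] ≤ LCP[l]` for all `l ∈ [k+1, i]`. -/
def FailCand [LinearOrder α] (m : List (WithBot α)) (SA : ℕ → ℕ) (i k : ℕ) : Prop :=
  k < i ∧ ∀ l, k < l → l ≤ i → lrs m SA k ≤ lcpP m SA l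

/-- The arc set `A_F(P)` on `Decomp_BWT(P)`: the largest failure candidate for `u.1`
exists and lies in `v`. -/
def AF [LinearOrder α] (m : List (WithBot α)) (SA : ℕ → ℕ) :
    Set ((ℕ × ℕ) × (ℕ × ℕ)) :=
  { uv | uv.1 ∈ DecompBWT m SA ∧ uv.2 ∈ DecompBWT m SA ∧
      ∃ k, FailCand m SA uv.1.1 k ∧ (∀ k', FailCand m SA uv.1.1 k' → k' ≤ k) ∧
        uv.2.1 ≤ k ∧ k ≤ uv.2.2 }

/-- Arc relation of the Aho–Corasick failure-link graph on the vertex set `Pref`: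
`q` is the longest proper suffix of `p` belonging to `Pref`. -/
def ACFLedge (Pref : Set (List β)) (p q : List β) : Prop :=
  p ∈ Pref ∧ q ∈ Pref ∧ p ≠ q ∧ q <:+ p ∧
    ∀ r ∈ Pref, r ≠ p → r <:+ p → r.length ≤ q.length

/-- The Run-Length measure `d_B(P) = #{i : BWT[i] ≠ BWT[i+1]}` (0-based, `i` ranging
over the first `|m| − 1` positions). -/
def dB [LinearOrder α] (m : List (WithBot α)) (SA : ℕ → ℕ) : ℕ :=
  ((List.range (m.length - 1)).filter
      (fun i => decide (bwtArr m SA i ≠ bwtArr m SA (i + 1)))).length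

/-- `P` is topologically planar: for every prefix `p` of the reverse of some string of
`P.S`, the indices `r` with `p` a prefix of `reverse(t_r)` form a set of consecutive
integers. -/
def TopPlanar [DecidableEq α] (P : OSS α) : Prop :=
  ∀ p : List α, (∃ s ∈ P.strs, p <+: s.reverse) →
    ∀ r₁ r₂ r₃ : ℕ, r₁ ≤ r₂ → r₂ ≤ r₃ → r₃ < P.strs.length →
      p <+: (P.strs.getD r₁ []).reverse → p <+: (P.strs.getD r₃ []).reverse →
      p <+: (P.strs.getD r₂ []).reverse

/-- `Letter[i]`: the first symbol of the suffix of rank `i`, i.e. `m[SA i]`. -/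
def letterArr (m : List (WithBot α)) (SA : ℕ → ℕ) (i : ℕ) : WithBot α :=
  m.getD (SA i) ⊥

/-- 0-based select: the position of the `(j+1)`-st occurrence of `c` in
`f 0, f 1, …, f (N−1)`. -/
def select0 [LinearOrder α] (f : ℕ → WithBot α) (N : ℕ) (c : WithBot α) (j : ℕ) : ℕ :=
  (((List.range N).filter (fun k => decide (f k = c)))).getD j 0

/-- The inverse Last-to-First mapping (0-based):
`RLF[i] = select_{Letter[i]}(BWT, i − C[Letter[i]])`. -/
def RLF [LinearOrder α] (m : List (WithBot α)) (SA : ℕ → ℕ) (i : ℕ) : ℕ :=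
  select0 (bwtArr m SA) m.length (letterArr m SA i)
    (i - Cfun m (letterArr m SA i))

/-- `d_A(T') = #{i : T'[i] ≠ T'[i+1]}`, the number of adjacent mismatches. -/
def dA [DecidableEq β] : List β → ℕ
  | a :: b :: t => (if a = b then 0 else 1) + dA (b :: t)
  | _ => 0

/-- `T'` is valid for the block decomposition `B` (an interval partition given by the
lengths of the blocks): `T'` splits into blocks of the same lengths as those of `B`,
with the same symbol set blockwise. -/
def ValidArr [DecidableEq β] (B : List (List β)) (T' : List β) : Prop :=
  ∃ B' : List (List β),
    List.Forall₂ (fun b b' => b.length = b'.length ∧ b.toFinset = b'.toFinset) B B' ∧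
    B'.flatten = T'

/-- `T'` is optimal for the block decomposition `B`: valid and of minimal `d_A`. -/
def OptimalArr [DecidableEq β] (B : List (List β)) (T' : List β) : Prop :=
  ValidArr B T' ∧ ∀ T'' : List β, ValidArr B T'' → dA T' ≤ dA T''

/-! The word of a position of `m_P` (its symbols up to the next `$`) is a suffix of a string
of `P.S`, every such suffix occurs, and `Dec_Pre` reverses the word at `SA[u.1]`. The suffixes
beginning with `w$` are consecutive in `SA`, so the ranks carrying a given word form an
interval, and `LCP(P)[k] = LRS(P)[k]` holds exactly when ranks `k - 1` and `k` carry the same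
word. The blocks of `Decomp_BWT(P)` are therefore the maximal runs of a labelling whose label
classes are intervals, and such runs correspond bijectively to the labels. -/

theorem head_le_of_cons_le [LinearOrder β] {a b : β} {l l' : List β} (h : a :: l ≤ b :: l') :
    a ≤ b := by
  rcases h.lt_or_eq with h | h
  · exact List.head_le_of_lt h
  · exact (List.cons.inj h).1.le

theorem le_of_cons_le_cons [LinearOrder β] {a : β} {l l' : List β} (h : a :: l ≤ a :: l') :
    l ≤ l' := by
  rcases h.lt_or_eq with h | h
  · exact (List.cons_lt_cons_self.mp h).le
  · exact (List.cons.inj h).2.le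

theorem isPrefix_of_le_of_le [LinearOrder β] {u l₁ l₂ l₃ : List β} (h₁ : u <+: l₁)
    (h₃ : u <+: l₃) (h₁₂ : l₁ ≤ l₂) (h₂₃ : l₂ ≤ l₃) : u <+: l₂ := by
  induction u generalizing l₁ l₂ l₃ with
  | nil => exact List.nil_prefix
  | cons a u ih =>
    obtain ⟨t₁, rfl⟩ := h₁
    obtain ⟨t₃, rfl⟩ := h₃
    cases l₂ with
    | nil => exact absurd h₁₂ (not_le.mpr (List.nil_lt_cons _ _))
    | cons b t₂ =>
      obtain rfl : a = b := (head_le_of_cons_le h₁₂).antisymm (head_le_of_cons_le h₂₃)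
      exact List.cons_prefix_cons.mpr ⟨rfl, ih (List.prefix_append u t₁)
        (List.prefix_append u t₃) (le_of_cons_le_cons h₁₂) (le_of_cons_le_cons h₂₃)⟩

theorem le_lcpLen_iff [DecidableEq β] {x l₁ l₂ : List β} (h : x <+: l₂) :
    x.length ≤ lcpLen l₁ l₂ ↔ x <+: l₁ := by
  induction x generalizing l₁ l₂ with
  | nil => simp
  | cons a x ih =>
    obtain ⟨t, rfl⟩ := h
    cases l₁ with
    | nil => simp [lcpLen]
    | cons b s =>
      by_cases hba : b = a
      · subst hba
        simp [lcpLen, ih (List.prefix_append x t)]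
      · simp [lcpLen, hba, Ne.symm hba]

-- `c k` means that position `k` continues the run of position `k - 1`.
def maximalRuns (N : ℕ) (c : ℕ → Prop) : Set (ℕ × ℕ) :=
  { u | u.1 ≤ u.2 ∧ u.2 < N ∧ (∀ k, u.1 < k → k ≤ u.2 → c k) ∧
        (u.1 = 0 ∨ ¬ c u.1) ∧ (u.2 + 1 = N ∨ ¬ c (u.2 + 1)) }

theorem eq_of_forall_sub_one_eq {f : ℕ → β} {a b : ℕ} (hab : a ≤ b)
    (h : ∀ k, a < k → k ≤ b → f (k - 1) = f k) : f a = f b := by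
  induction b, hab using Nat.le_induction with
  | base => rfl
  | succ b hab ih =>
    rw [ih fun k hk hkb => h k hk (by omega), ← h (b + 1) (by omega) le_rfl]
    rfl

theorem exists_mem_maximalRuns {N i : ℕ} (c : ℕ → Prop) (hi : i < N) :
    ∃ u ∈ maximalRuns N c, u.1 ≤ i ∧ i ≤ u.2 := by
  classical
  let start : ℕ → Prop := fun k => k = 0 ∨ ¬ c k
  have hend : ∃ b, i ≤ b ∧ (b + 1 = N ∨ ¬ c (b + 1)) := ⟨N - 1, by omega, Or.inl (by omega)⟩
  let a := Nat.findGreatest start i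
  let b := Nat.find hend
  have hai : a ≤ i := Nat.findGreatest_le i
  obtain ⟨hib, hb⟩ : i ≤ b ∧ (b + 1 = N ∨ ¬ c (b + 1)) := Nat.find_spec hend
  have hbN : b < N := by
    have := Nat.find_min' hend (m := N - 1) ⟨by omega, Or.inl (by omega)⟩
    omega
  have ha : start a := Nat.findGreatest_spec (Nat.zero_le i) (Or.inl rfl)
  refine ⟨(a, b), ⟨hai.trans hib, hbN, ?_, ha, hb⟩, hai, hib⟩
  intro k hak hkb
  rcases le_or_gt k i with hki | hik
  · by_contra hck
    exact Nat.findGreatest_is_greatest hak hki (Or.inr hck)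
  · have hmin := Nat.find_min hend (show k - 1 < b by omega)
    rw [Nat.sub_add_cancel (by omega : 1 ≤ k)] at hmin
    by_contra hck
    exact hmin ⟨by omega, Or.inr hck⟩

theorem bijOn_maximalRuns {N : ℕ} {c : ℕ → Prop} (f : ℕ → β)
    (hc : ∀ k, 0 < k → k < N → (c k ↔ f (k - 1) = f k))
    (hconv : ∀ i k j, i ≤ k → k ≤ j → j < N → f i = f j → f k = f i) :
    Set.BijOn (fun u => f u.1) (maximalRuns N c) (f '' Set.Iio N) := by
  refine ⟨fun u hu => ⟨u.1, hu.1.trans_lt hu.2.1, rfl⟩, ?_, ?_⟩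
  · have hstart : ∀ v ∈ maximalRuns N c, ∀ i < v.1, f i ≠ f v.1 := by
      rintro v ⟨hv, hvN, -, hv0 | hvc, -⟩ i hi he
      · omega
      · refine hvc ((hc v.1 (by omega) (by omega)).mpr ?_)
        rw [hconv i (v.1 - 1) v.1 (by omega) (by omega) (by omega) he, he]
    have hend : ∀ u ∈ maximalRuns N c, ∀ v ∈ maximalRuns N c, u.1 = v.1 → u.2 ≤ v.2 := by
      rintro u ⟨-, huN, hu, -, -⟩ v ⟨hv, -, -, -, hvN | hvc⟩ h1
      · omega
      · by_contra! hlt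
        exact hvc (hu (v.2 + 1) (by omega) hlt)
    intro u hu v hv he
    have h1 : u.1 = v.1 := by
      by_contra hne
      rcases Nat.lt_or_gt_of_ne hne with h | h
      exacts [hstart v hv _ h he, hstart u hu _ h he.symm]
    exact Prod.ext h1 ((hend u hu v hv h1).antisymm (hend v hv u hu h1.symm))
  · rintro _ ⟨i, hi : i < N, rfl⟩
    obtain ⟨u, hu, hui, hiu⟩ := exists_mem_maximalRuns c hi
    exact ⟨u, hu, eq_of_forall_sub_one_eq hui fun k hk hki =>
      (hc k (by omega) (by omega)).mp (hu.2.2.1 k hk (by omega))⟩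

-- `mP` for an arbitrary list of strings, so that one can induct on the list.
def mString (L : List (List α)) : List (WithBot α) :=
  (L.map (fun s => s.map sym ++ [⊥])).flatten

@[simp]
theorem mString_nil : mString ([] : List (List α)) = [] := rfl

theorem mP_eq_mString (P : OSS α) : mP P = mString P.strs := rfl

theorem mString_cons (s : List α) (L : List (List α)) :
    mString (s :: L) = (s.map sym ++ [⊥]) ++ mString L := rfl

theorem bot_notMem_of_suffix {x : List (WithBot α)} {t : List α} (h : x <:+ t.map sym) :
    ⊥ ∉ x := fun hx => by
  obtain ⟨a, -, ha⟩ := List.mem_map.mp (h.subset hx)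
  exact WithBot.coe_ne_bot ha

theorem drop_mString_of_lt {L : List (List α)} {q : ℕ} (hq : q < (mString L).length) :
    ∃ t ∈ L, ∃ x r, x <:+ t.map sym ∧ (mString L).drop q = x ++ ⊥ :: r := by
  induction L generalizing q with
  | nil => simp at hq
  | cons s L ih =>
    rw [mString_cons] at hq ⊢
    by_cases hqs : q ≤ (s.map sym).length
    · refine ⟨s, List.mem_cons_self, _, mString L, List.drop_suffix q _, ?_⟩
      rw [List.append_assoc, List.drop_append_of_le_length hqs, List.singleton_append]
    · obtain ⟨q', rfl⟩ : ∃ q', q = (s.map sym ++ [⊥]).length + q' :=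
        ⟨q - (s.map sym ++ [⊥]).length, by simp at hqs ⊢; omega⟩
      obtain ⟨t, ht, x, r, hx, hdrop⟩ := ih (q := q') (by simp at hq; omega)
      refine ⟨t, List.mem_cons_of_mem s ht, x, r, hx, ?_⟩
      rw [← List.drop_drop, List.drop_append_length, hdrop]

theorem exists_drop_mString_of_suffix {L : List (List α)} {t : List α} (ht : t ∈ L)
    {x : List (WithBot α)} (hx : x <:+ t.map sym) :
    ∃ q < (mString L).length, ∃ r, (mString L).drop q = x ++ ⊥ :: r := by
  induction L with
  | nil => simp at ht
  | cons s L ih =>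
    rw [mString_cons]
    rcases List.mem_cons.mp ht with rfl | ht
    · obtain ⟨y, hy⟩ := hx
      refine ⟨y.length, by simp [← hy], mString L, ?_⟩
      rw [← hy, List.append_assoc, List.append_assoc, List.drop_left, List.singleton_append]
    · obtain ⟨q, hq, r, hdrop⟩ := ih ht
      refine ⟨(s.map sym ++ [⊥]).length + q, by simp; omega, r, ?_⟩
      rw [← List.drop_drop, List.drop_append_length, hdrop]

section LinearOrder

variable [LinearOrder α]

def firstWord (l : List (WithBot α)) : List (WithBot α) :=
  l.takeWhile (fun c => decide (c ≠ ⊥))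

theorem firstWord_prefix (l : List (WithBot α)) : firstWord l <+: l :=
  List.takeWhile_prefix _

theorem bot_notMem_firstWord (l : List (WithBot α)) : ⊥ ∉ firstWord l := fun h =>
  by simpa using List.mem_takeWhile_imp h

theorem firstWord_append {x : List (WithBot α)} (hx : ⊥ ∉ x) (s : List (WithBot α)) :
    firstWord (x ++ s) = x ++ firstWord s :=
  List.takeWhile_append_of_pos fun _ ha => by simpa using ne_of_mem_of_not_mem ha hx

theorem firstWord_append_bot_cons {x : List (WithBot α)} (hx : ⊥ ∉ x) (r : List (WithBot α)) :
    firstWord (x ++ ⊥ :: r) = x := by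
  rw [firstWord_append hx]
  simp [firstWord]

theorem firstWord_eq_of_le_of_le {x l r₁ r₃ : List (WithBot α)} (hx : ⊥ ∉ x)
    (h₁ : x ++ ⊥ :: r₁ ≤ l) (h₃ : l ≤ x ++ ⊥ :: r₃) : firstWord l = x := by
  obtain ⟨s, rfl⟩ := isPrefix_of_le_of_le (u := x ++ [⊥]) (by simp) (by simp) h₁ h₃
  simpa using firstWord_append_bot_cons hx s

-- A letter after `x` in `l` would put `l` above `x $ r`, since `$` is the least symbol.
theorem firstWord_eq_of_lt {x l r : List (WithBot α)} (hx : ⊥ ∉ x)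
    (hlt : l < x ++ ⊥ :: r) (hpre : x <+: l) : firstWord l = x := by
  obtain ⟨s, rfl⟩ := hpre
  rcases s with _ | ⟨c, s⟩
  · simpa [firstWord] using firstWord_append hx []
  by_cases hc : c = ⊥
  · subst hc
    exact firstWord_append_bot_cons hx s
  · have : x ++ ⊥ :: r < x ++ c :: s :=
      List.append_left_lt (List.Lex.rel (bot_lt_iff_ne_bot.mpr hc))
    exact absurd hlt (lt_asymm this)

theorem revPrefixes_eq_image (P : OSS α) :
    revPrefixes P =
      (fun q => (firstWord ((mP P).drop q)).reverse) '' Set.Iio (mP P).length := by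
  ext p
  simp only [revPrefixes, List.map_reverse, Set.mem_image, Set.mem_Iio]
  constructor
  · rintro ⟨s, hs, hp⟩
    have hsuf : p.reverse <:+ s.map sym := by
      rwa [← List.reverse_prefix, List.reverse_reverse]
    obtain ⟨q, hq, r, hdrop⟩ := exists_drop_mString_of_suffix hs hsuf
    refine ⟨q, hq, ?_⟩
    rw [mP_eq_mString, hdrop, firstWord_append_bot_cons (bot_notMem_of_suffix hsuf),
      List.reverse_reverse]
  · rintro ⟨q, hq, rfl⟩
    obtain ⟨t, ht, x, r, hx, hdrop⟩ := drop_mString_of_lt hq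
    refine ⟨t, ht, ?_⟩
    rw [mP_eq_mString, hdrop, firstWord_append_bot_cons (bot_notMem_of_suffix hx)]
    exact List.reverse_prefix.mpr hx

theorem drop_mP_eq_firstWord_append (P : OSS α) {q : ℕ}
    (hq : q < (mP P).length) :
    ∃ r, (mP P).drop q = firstWord ((mP P).drop q) ++ ⊥ :: r := by
  obtain ⟨t, -, x, r, hx, hdrop⟩ := drop_mString_of_lt hq
  rw [mP_eq_mString, hdrop, firstWord_append_bot_cons (bot_notMem_of_suffix hx)]
  exact ⟨r, rfl⟩

theorem decompBWT_eq_maximalRuns (m : List (WithBot α)) (SA : ℕ → ℕ) :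
    DecompBWT m SA = maximalRuns m.length (fun k => lcpP m SA k = lrs m SA k) := rfl

theorem lrs_eq_length_firstWord (m : List (WithBot α)) (SA : ℕ → ℕ) (i : ℕ) :
    lrs m SA i = (firstWord (m.drop (SA i))).length := rfl

theorem decPre_eq_reverse_firstWord (m : List (WithBot α)) (SA : ℕ → ℕ) (u : ℕ × ℕ) :
    decPre m SA u = (firstWord (m.drop (SA u.1))).reverse := by
  rw [decPre, lrs_eq_length_firstWord, ← List.prefix_iff_eq_take.mp (firstWord_prefix _)]

theorem IsSuffixArray.drop_lt_drop {m : List (WithBot α)} {SA : ℕ → ℕ}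
    (hSA : IsSuffixArray m SA) {i j : ℕ} (hij : i < j) (hj : j < m.length) :
    m.drop (SA i) < m.drop (SA j) :=
  hSA.2 i j hij hj

theorem IsSuffixArray.drop_le_drop {m : List (WithBot α)} {SA : ℕ → ℕ}
    (hSA : IsSuffixArray m SA) {i j : ℕ} (hij : i ≤ j) (hj : j < m.length) :
    m.drop (SA i) ≤ m.drop (SA j) := by
  rcases hij.lt_or_eq with hij | rfl
  exacts [(hSA.drop_lt_drop hij hj).le, le_rfl]

theorem lcpP_eq_lrs_iff {P : OSS α} {SA : ℕ → ℕ} (hSA : IsSuffixArray (mP P) SA) {k : ℕ}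
    (hk0 : 0 < k) (hk : k < (mP P).length) :
    lcpP (mP P) SA k = lrs (mP P) SA k ↔
      firstWord ((mP P).drop (SA (k - 1))) = firstWord ((mP P).drop (SA k)) := by
  rw [lcpP, if_neg hk0.ne', min_eq_right_iff, lrs_eq_length_firstWord,
    le_lcpLen_iff (firstWord_prefix _)]
  obtain ⟨r, hr⟩ := drop_mP_eq_firstWord_append P (hSA.1.mapsTo hk)
  constructor
  · intro hpre
    have hlt := hSA.drop_lt_drop (i := k - 1) (by omega) hk
    exact firstWord_eq_of_lt (bot_notMem_firstWord _) (hr ▸ hlt) hpre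
  · intro h
    exact h ▸ firstWord_prefix _

theorem firstWord_drop_eq_of_le_of_le {P : OSS α} {SA : ℕ → ℕ}
    (hSA : IsSuffixArray (mP P) SA) {i k j : ℕ} (hik : i ≤ k) (hkj : k ≤ j)
    (hj : j < (mP P).length)
    (h : firstWord ((mP P).drop (SA i)) = firstWord ((mP P).drop (SA j))) :
    firstWord ((mP P).drop (SA k)) = firstWord ((mP P).drop (SA i)) := by
  obtain ⟨r₁, h₁⟩ := drop_mP_eq_firstWord_append P (hSA.1.mapsTo (show i < _ by omega))
  obtain ⟨r₃, h₃⟩ := drop_mP_eq_firstWord_append P (hSA.1.mapsTo hj)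
  rw [← h] at h₃
  exact firstWord_eq_of_le_of_le (bot_notMem_firstWord _)
    (h₁ ▸ hSA.drop_le_drop hik (by omega)) (h₃ ▸ hSA.drop_le_drop hkj hj)

end LinearOrder

theorem decPre_bijOn_general [LinearOrder α] (P : OSS α) (SA : ℕ → ℕ)
    (hSA : IsSuffixArray (mP P) SA) :
    Set.BijOn (decPre (mP P) SA) (DecompBWT (mP P) SA) (revPrefixes P) := by
  set W : ℕ → List (WithBot α) := fun i => firstWord ((mP P).drop (SA i))
  have hruns :
      Set.BijOn (fun u => W u.1) (DecompBWT (mP P) SA) (W '' Set.Iio (mP P).length) := by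
    rw [decompBWT_eq_maximalRuns]
    exact bijOn_maximalRuns W (fun _ => lcpP_eq_lrs_iff hSA)
      (fun _ _ _ => firstWord_drop_eq_of_le_of_le hSA)
  have himage : List.reverse '' (W '' Set.Iio (mP P).length) = revPrefixes P := by
    rw [revPrefixes_eq_image, Set.image_image]
    conv_rhs => rw [← hSA.1.image_eq, Set.image_image]
  rw [← himage, funext (decPre_eq_reverse_firstWord (mP P) SA)]
  exact List.reverse_injective.injOn.bijOn_image.comp hruns

/-- `Dec_Pre` is a bijection from `Decomp_BWT(P)` onto
`Prefix(←P.S)`. -/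
theorem decPre_bijOn [Fintype α] [LinearOrder α] (P : OSS α) (SA : ℕ → ℕ)
    (hSA : IsSuffixArray (mP P) SA) :
    Set.BijOn (decPre (mP P) SA) (DecompBWT (mP P) SA) (revPrefixes P) :=
  decPre_bijOn_general P SA hSA

end BwtXbw
end

section
/- Let P be an ordered set of strings and let u = [i,j] ∈ Decomp_BWT(P). Then for every k ∈ [i,j], the reverse of the substring m_P[SA(m_P)[k] .. SA(m_P)[k]+LRS(P)[k]−1] equals Dec_Pre[u]; in particular LRS(P)[k] = LRS(P)[i] for all k ∈ [i,j]. -/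
namespace BwtXbw

variable {α β : Type*}

theorem take_eq_take_of_le_lcpLen [DecidableEq β] {s t : List β} {n : ℕ}
    (h : n ≤ lcpLen s t) : s.take n = t.take n := by
  induction s, t using lcpLen.induct generalizing n with
  | case1 s b t ih =>
    cases n with
    | zero => rfl
    | succ n =>
      simp only [lcpLen, if_pos] at h
      rw [List.take_succ_cons, List.take_succ_cons, ih (by omega)]
  | case2 a s b t hab => simp [lcpLen, hab] at h; simp [h]
  | case3 s t hst =>
    match s, t with
    | [], _ | _ :: _, [] => simp_all [lcpLen]
    | a :: s, b :: t => exact (hst a s b t rfl rfl).elim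

/-- A lexicographically smaller list that starts with the `⊥`-free head of `l` has the same
`⊥`-free head: a further non-`⊥` symbol where `l` has `⊥` would make it larger. -/
theorem takeWhile_ne_bot_eq_of_lex [Preorder β] [OrderBot β] [DecidableEq β]
    {l l' : List β} (hlex : List.Lex (· < ·) l' l)
    (hpre : l.takeWhile (fun c => decide (c ≠ ⊥)) <+: l') :
    l'.takeWhile (fun c => decide (c ≠ ⊥)) = l.takeWhile (fun c => decide (c ≠ ⊥)) := by
  induction l generalizing l' with
  | nil => cases hlex
  | cons a l ih =>
    by_cases ha : a = ⊥
    · subst ha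
      cases hlex with
      | nil | cons => simp
      | rel hlt => exact absurd hlt not_lt_bot
    rw [List.takeWhile_cons_of_pos (by simpa using ha)] at hpre ⊢
    obtain ⟨l', rfl, hpre⟩ : ∃ l'', l' = a :: l'' ∧ l.takeWhile _ <+: l'' := by
      obtain ⟨t, rfl⟩ := hpre
      exact ⟨_, rfl, List.prefix_append _ _⟩
    rw [List.takeWhile_cons_of_pos (by simpa using ha), ih (List.lex_cons_iff.1 hlex) hpre]

section SuffixArray

variable [LinearOrder α] {m : List (WithBot α)} {SA : ℕ → ℕ}

theorem take_lrs_eq_takeWhile (k : ℕ) :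
    (m.drop (SA k)).take (lrs m SA k) = (m.drop (SA k)).takeWhile (fun c => decide (c ≠ ⊥)) :=
  (List.prefix_iff_eq_take.1 (List.takeWhile_prefix _)).symm

theorem takeWhile_drop_eq_of_lcpP_eq_lrs (hSA : IsSuffixArray m SA) {k : ℕ}
    (hk : k + 1 < m.length) (hlcp : lcpP m SA (k + 1) = lrs m SA (k + 1)) :
    (m.drop (SA k)).takeWhile (fun c => decide (c ≠ ⊥)) =
      (m.drop (SA (k + 1))).takeWhile (fun c => decide (c ≠ ⊥)) := by
  have hle : lrs m SA (k + 1) ≤ lcpLen (m.drop (SA k)) (m.drop (SA (k + 1))) := by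
    rw [lcpP, if_neg k.succ_ne_zero, Nat.add_sub_cancel] at hlcp
    exact min_eq_right_iff.1 hlcp
  apply takeWhile_ne_bot_eq_of_lex (hSA.2 k (k + 1) k.lt_succ_self hk)
  rw [← take_lrs_eq_takeWhile, ← take_eq_take_of_le_lcpLen hle]
  exact List.take_prefix _ _

theorem takeWhile_drop_eq_of_mem_decompBWT (hSA : IsSuffixArray m SA) {u : ℕ × ℕ}
    (hu : u ∈ DecompBWT m SA) {k : ℕ} (hk₁ : u.1 ≤ k) (hk₂ : k ≤ u.2) :
    (m.drop (SA k)).takeWhile (fun c => decide (c ≠ ⊥)) =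
      (m.drop (SA u.1)).takeWhile (fun c => decide (c ≠ ⊥)) := by
  obtain ⟨-, hlen, hinner, -⟩ := hu
  induction k, hk₁ using Nat.le_induction with
  | base => rfl
  | succ k hk ih =>
    rw [← ih (by omega), takeWhile_drop_eq_of_lcpP_eq_lrs hSA (by omega)
      (hinner (k + 1) (by omega) hk₂)]

end SuffixArray

theorem decPre_const_on_interval_general [LinearOrder α] (P : OSS α)
    (SA : ℕ → ℕ) (hSA : IsSuffixArray (mP P) SA)
    (u : ℕ × ℕ) (hu : u ∈ DecompBWT (mP P) SA) :
    ∀ k, u.1 ≤ k → k ≤ u.2 →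
      (((mP P).drop (SA k)).take (lrs (mP P) SA k)).reverse = decPre (mP P) SA u ∧
      lrs (mP P) SA k = lrs (mP P) SA u.1 := by
  intro k hk₁ hk₂
  have hblock := takeWhile_drop_eq_of_mem_decompBWT hSA hu hk₁ hk₂
  refine ⟨?_, congrArg List.length hblock⟩
  rw [decPre, take_lrs_eq_takeWhile, take_lrs_eq_takeWhile, hblock]

/-- On an interval `u = [i,j] ∈ Decomp_BWT(P)`, the reverse of
`m_P[SA[k] .. SA[k]+LRS[k]−1]` equals `Dec_Pre[u]` for every `k ∈ [i,j]`; in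
particular `LRS[k] = LRS[i]`. -/
theorem decPre_const_on_interval [Fintype α] [LinearOrder α] (P : OSS α)
    (SA : ℕ → ℕ) (hSA : IsSuffixArray (mP P) SA)
    (u : ℕ × ℕ) (hu : u ∈ DecompBWT (mP P) SA) :
    ∀ k, u.1 ≤ k → k ≤ u.2 →
      (((mP P).drop (SA k)).take (lrs (mP P) SA k)).reverse = decPre (mP P) SA u ∧
      lrs (mP P) SA k = lrs (mP P) SA u.1 :=
  decPre_const_on_interval_general P SA hSA u hu

end BwtXbw
end

section
/- Let P be an ordered set of strings and define A_T(P) = {(u,v) ∈ Decomp_BWT(P)² : there exists x ∈ u with BWT(P)[x] ≠ $ and LF(P)[x] ∈ v}. Then for all u, v ∈ Decomp_BWT(P), (u,v) ∈ A_T(P) if and only if Dec_Pre[u] is the longest proper prefix of Dec_Pre[v] among the elements of Prefix(←P.S). Consequently the directed graph (Decomp_BWT(P), A_T(P)) is isomorphic, via the bijection Dec_Pre, to the Aho–Corasick tree ACT(←P.S). -/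
namespace BwtXbw

variable {α β : Type*}

/-!
The head of a suffix is its part before the first separator `$ = ⊥`; `rankHead m SA i` is the
head of the suffix of rank `i`, and `Dec_Pre` of a block is the reversed head of its first rank.
All suffixes with head `h` begin with `h ++ [$]`, so they occupy consecutive ranks, and
`LCP(P)[i] = LRS(P)[i]` says exactly that ranks `i - 1` and `i` have the same head. Hence the
blocks of `Decomp_BWT(P)` are the fibres of the head map, whose values are the suffixes of the
strings of `P.S`, i.e. the reverses of the elements of `Prefix(←P.S)`. For `BWT[x] = c ≠ $`,
`LF[x]` is the rank of the suffix starting one position to the left, whose head is `c` followed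
by the head of `x`. So `(u, v)` is an arc iff `Dec_Pre[v] = Dec_Pre[u] ++ [c]` for some `c`,
which in a prefix-closed set is the Aho–Corasick parent relation.
-/

section Lists

theorem prefix_of_not_lt_of_not_lt [LinearOrder β] {u A B C : List β} (hA : u <+: A)
    (hB : u <+: B) (hCA : ¬ C < A) (hBC : ¬ B < C) : u <+: C := by
  induction u generalizing A B C with
  | nil => exact List.nil_prefix
  | cons x u ih =>
    obtain ⟨A, rfl⟩ := hA
    obtain ⟨B, rfl⟩ := hB
    cases C with
    | nil => simp at hCA
    | cons y C =>
      simp only [List.cons_append, List.cons_lt_cons_iff, not_or, not_and] at hCA hBC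
      obtain rfl : x = y := le_antisymm (not_lt.mp hCA.1) (not_lt.mp hBC.1)
      exact (List.prefix_cons_inj x).mpr
        (ih (List.prefix_append u A) (List.prefix_append u B) (hCA.2 rfl) (hBC.2 rfl))

theorem prefix_iff_length_le_lcpLen [DecidableEq β] {u A B : List β} (hB : u <+: B) :
    u <+: A ↔ u.length ≤ lcpLen A B := by
  induction u generalizing A B with
  | nil => simp
  | cons x u ih =>
    obtain ⟨B, rfl⟩ := hB
    cases A with
    | nil => simp [lcpLen]
    | cons a A =>
      by_cases hax : a = x
      · subst hax
        simp [lcpLen, ih (List.prefix_append u B)]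
      · simp [lcpLen, hax, Ne.symm hax]

theorem drop_eq_getD_cons {l : List β} {n : ℕ} (d : β) (h : n < l.length) :
    l.drop n = l.getD n d :: l.drop (n + 1) := by
  rw [List.getD_eq_getElem _ _ h]
  exact List.drop_eq_getElem_cons h

theorem map_getD_range (m : List β) (d : β) :
    (List.range m.length).map (fun p => m.getD p d) = m :=
  List.ext_getElem (by simp) fun i h _ => by simp [List.getElem?_eq_getElem (by simpa using h)]

theorem length_filter_range (n : ℕ) (p : ℕ → Bool) :
    ((List.range n).filter p).length = ((Finset.range n).filter (fun i => p i)).card := by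
  simp [Finset.range, Finset.filter, Multiset.range]

theorem length_filter_eq_card (m : List β) (d : β) (q : β → Bool) :
    (m.filter q).length = ((Finset.range m.length).filter (fun p => q (m.getD p d))).card := by
  conv_lhs => rw [← map_getD_range m d]
  rw [List.filter_map, List.length_map, length_filter_range]
  rfl

end Lists

section MaxRuns
variable {γ : Type*} {f : ℕ → γ} {N : ℕ} {u : ℕ × ℕ}

def IsMaxRun (f : ℕ → γ) (N : ℕ) (u : ℕ × ℕ) : Prop :=
  u.1 ≤ u.2 ∧ u.2 < N ∧ (∀ k, u.1 < k → k ≤ u.2 → f (k - 1) = f k) ∧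
    (u.1 = 0 ∨ f (u.1 - 1) ≠ f u.1) ∧ (u.2 + 1 = N ∨ f u.2 ≠ f (u.2 + 1))

def HasConvexFibres (f : ℕ → γ) (N : ℕ) : Prop :=
  ∀ ⦃i k j⦄, i ≤ k → k ≤ j → j < N → f i = f j → f k = f i

theorem IsMaxRun.apply_eq (hu : IsMaxRun f N u) {k : ℕ} (h1 : u.1 ≤ k) (h2 : k ≤ u.2) :
    f k = f u.1 := by
  induction k with
  | zero => rw [Nat.le_zero.mp h1]
  | succ k ih =>
    rcases h1.eq_or_lt with h | h
    · rw [h]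
    · rw [← hu.2.2.1 (k + 1) h h2, Nat.add_sub_cancel, ih (by omega) (by omega)]

theorem IsMaxRun.mem_iff (hf : HasConvexFibres f N) (hu : IsMaxRun f N u) {x : ℕ} :
    (u.1 ≤ x ∧ x ≤ u.2) ↔ (x < N ∧ f x = f u.1) := by
  refine ⟨fun ⟨h1, h2⟩ => ⟨by have := hu.2.1; omega, hu.apply_eq h1 h2⟩,
    fun ⟨hx, hfx⟩ => ?_⟩
  have hfu : f u.2 = f x := (hu.apply_eq hu.1 le_rfl).trans hfx.symm
  obtain ⟨hle, hN, -, hleft, hright⟩ := hu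
  constructor
  · by_contra! hxu
    refine hleft.resolve_left (by omega) ?_
    rw [hf (Nat.le_sub_one_of_lt hxu) (Nat.sub_le _ _) (by omega) hfx, hfx]
  · by_contra! hxu
    refine hright.resolve_left (by omega) ?_
    rw [hf (Nat.le_succ u.2) hxu hx hfu]

theorem IsMaxRun.eq_of_apply_eq (hf : HasConvexFibres f N) {v : ℕ × ℕ} (hu : IsMaxRun f N u)
    (hv : IsMaxRun f N v) (h : f u.1 = f v.1) : u = v := by
  have hu2 : u.1 ≤ u.2 ∧ u.2 < N := ⟨hu.1, hu.2.1⟩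
  have hv2 : v.1 ≤ v.2 ∧ v.2 < N := ⟨hv.1, hv.2.1⟩
  have h₁ := (hv.mem_iff hf).mpr ⟨by omega, h⟩
  have h₂ := (hu.mem_iff hf).mpr ⟨by omega, h.symm⟩
  have h₃ := (hv.mem_iff hf).mpr ⟨hu2.2, (hu.apply_eq hu2.1 le_rfl).trans h⟩
  have h₄ := (hu.mem_iff hf).mpr ⟨hv2.2, (hv.apply_eq hv2.1 le_rfl).trans h.symm⟩
  exact Prod.ext (by omega) (by omega)

theorem exists_isMaxRun (hf : HasConvexFibres f N) {x : ℕ} (hx : x < N) :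
    ∃ u, IsMaxRun f N u ∧ u.1 ≤ x ∧ x ≤ u.2 := by
  classical
  let l := Nat.find (⟨x, rfl⟩ : ∃ k, f k = f x)
  let r := Nat.findGreatest (fun k => f k = f x) (N - 1)
  have hl : f l = f x := Nat.find_spec (⟨x, rfl⟩ : ∃ k, f k = f x)
  have hlx : l ≤ x := Nat.find_min' _ rfl
  have hr : f r = f x := Nat.findGreatest_spec (P := fun k => f k = f x) (by omega) rfl
  have hxr : x ≤ r := Nat.le_findGreatest (by omega) rfl
  have hrN : r ≤ N - 1 := Nat.findGreatest_le _
  refine ⟨(l, r), ⟨by omega, by omega, fun k hk1 hk2 => ?_, ?_, ?_⟩, hlx, hxr⟩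
  · rw [hf (by omega) (by omega) (by omega) (hl.trans hr.symm),
      hf (le_of_lt hk1) hk2 (by omega) (hl.trans hr.symm)]
  · refine or_iff_not_imp_left.mpr fun hl0 heq => ?_
    exact Nat.find_min (⟨x, rfl⟩ : ∃ k, f k = f x) (show l - 1 < l by omega) (heq.trans hl)
  · refine or_iff_not_imp_left.mpr fun hrN' heq => ?_
    have := Nat.le_findGreatest (P := fun k => f k = f x) (show r + 1 ≤ N - 1 by omega)
      (heq.symm.trans hr)
    omega

end MaxRuns

section SuffixArrays

noncomputable def rankOf (m : List (WithBot α)) (SA : ℕ → ℕ) (p : ℕ) : ℕ :=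
  Function.invFunOn SA (Set.Iio m.length) p

variable [LinearOrder α] {m : List (WithBot α)} {SA : ℕ → ℕ} {i j p : ℕ}

theorem IsSuffixArray.SA_lt (hSA : IsSuffixArray m SA) (hi : i < m.length) : SA i < m.length :=
  hSA.1.mapsTo hi

theorem IsSuffixArray.drop_lt_drop_iff (hSA : IsSuffixArray m SA) (hi : i < m.length)
    (hj : j < m.length) : m.drop (SA i) < m.drop (SA j) ↔ i < j :=
  StrictMonoOn.lt_iff_lt (f := fun i => m.drop (SA i)) (fun i _ j hj hij => hSA.2 i j hij hj) hi hj

theorem IsSuffixArray.rankOf_lt (hSA : IsSuffixArray m SA) (hp : p < m.length) :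
    rankOf m SA p < m.length :=
  (Function.invFunOn_pos (hSA.1.surjOn hp)).1

theorem IsSuffixArray.SA_rankOf (hSA : IsSuffixArray m SA) (hp : p < m.length) :
    SA (rankOf m SA p) = p :=
  (Function.invFunOn_pos (hSA.1.surjOn hp)).2

theorem IsSuffixArray.rankOf_SA (hSA : IsSuffixArray m SA) (hi : i < m.length) :
    rankOf m SA (SA i) = i :=
  hSA.1.invOn_invFunOn.1 hi

end SuffixArrays

section Heads
variable [LinearOrder α] {m : List (WithBot α)} {SA : ℕ → ℕ} {i : ℕ}

def sepHead (l : List (WithBot α)) : List (WithBot α) :=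
  l.takeWhile (fun c => decide (c ≠ ⊥))

theorem ne_bot_of_mem_sepHead {l : List (WithBot α)} {x : WithBot α} (hx : x ∈ sepHead l) :
    x ≠ ⊥ := by
  simpa using List.mem_takeWhile_imp hx

theorem sepHead_cons_of_ne_bot {c : WithBot α} (hc : c ≠ ⊥) (l : List (WithBot α)) :
    sepHead (c :: l) = c :: sepHead l :=
  List.takeWhile_cons_of_pos (by simpa using hc)

theorem sepHead_append_bot {s : List (WithBot α)} (hs : ∀ x ∈ s, x ≠ ⊥)
    (r : List (WithBot α)) : sepHead (s ++ ⊥ :: r) = s := by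
  rw [sepHead, List.takeWhile_append_of_pos (by simpa using hs)]
  simp

theorem sepHead_sepHead_append_bot (l r : List (WithBot α)) :
    sepHead (sepHead l ++ ⊥ :: r) = sepHead l :=
  sepHead_append_bot (fun _ => ne_bot_of_mem_sepHead) r

theorem exists_eq_sepHead_append_bot {l : List (WithBot α)} (h : ⊥ ∈ l) :
    ∃ r, l = sepHead l ++ ⊥ :: r := by
  induction l with
  | nil => simp at h
  | cons c l ih =>
    by_cases hc : c = ⊥
    · subst hc
      exact ⟨l, by simp [sepHead]⟩
    · obtain ⟨r, hr⟩ := ih ((List.mem_cons.mp h).resolve_left (Ne.symm hc))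
      exact ⟨r, by rw [sepHead_cons_of_ne_bot hc, List.cons_append, ← hr]⟩

def rankHead (m : List (WithBot α)) (SA : ℕ → ℕ) (i : ℕ) : List (WithBot α) :=
  sepHead (m.drop (SA i))

theorem rankHead_prefix (m : List (WithBot α)) (SA : ℕ → ℕ) (i : ℕ) :
    rankHead m SA i <+: m.drop (SA i) :=
  List.takeWhile_prefix _

theorem decPre_eq_reverse_rankHead (u : ℕ × ℕ) :
    decPre m SA u = (rankHead m SA u.1).reverse :=
  congrArg List.reverse (List.prefix_iff_eq_take.mp (rankHead_prefix m SA u.1)).symm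

variable (hSA : IsSuffixArray m SA) (hm : m.getLast? = some ⊥)
include hSA hm

theorem exists_drop_SA_eq_rankHead_append (hi : i < m.length) :
    ∃ r, m.drop (SA i) = rankHead m SA i ++ ⊥ :: r := by
  obtain ⟨l, rfl⟩ := List.getLast?_eq_some_iff.mp hm
  refine exists_eq_sepHead_append_bot ?_
  have := hSA.SA_lt hi
  rw [List.drop_append_of_le_length (by simp at this; omega)]
  simp

theorem hasConvexFibres_rankHead : HasConvexFibres (rankHead m SA) m.length := by
  intro i k j hik hkj hj hij
  obtain ⟨a, ha⟩ := exists_drop_SA_eq_rankHead_append hSA hm (i := i) (by omega)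
  obtain ⟨b, hb⟩ := exists_drop_SA_eq_rankHead_append hSA hm hj
  have hpre : rankHead m SA i ++ [⊥] <+: m.drop (SA k) := by
    refine prefix_of_not_lt_of_not_lt (A := m.drop (SA i)) (B := m.drop (SA j))
      ⟨a, by simp [ha]⟩ ⟨b, by simp [hb, hij]⟩ ?_ ?_
    · rw [hSA.drop_lt_drop_iff (by omega) (by omega)]; omega
    · rw [hSA.drop_lt_drop_iff hj (by omega)]; omega
  obtain ⟨w, hw⟩ := hpre
  rw [List.append_assoc, List.singleton_append] at hw
  exact (congrArg sepHead hw).symm.trans (sepHead_sepHead_append_bot _ _)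

theorem lcpP_eq_lrs_iff_s2 (h0 : 0 < i) (hi : i < m.length) :
    lcpP m SA i = lrs m SA i ↔ rankHead m SA (i - 1) = rankHead m SA i := by
  obtain ⟨a, ha⟩ := exists_drop_SA_eq_rankHead_append hSA hm (i := i - 1) (by omega)
  obtain ⟨b, hb⟩ := exists_drop_SA_eq_rankHead_append hSA hm hi
  rw [lcpP, if_neg (by omega), min_eq_right_iff,
    show lrs m SA i = (rankHead m SA i).length from rfl,
    ← prefix_iff_length_le_lcpLen (rankHead_prefix m SA i)]
  -- `LCP = LRS` means the head of rank `i` is a prefix of the suffix of rank `i - 1`; the symbol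
  -- after it there is `$`, as anything larger would put that suffix after the one of rank `i`.
  constructor
  · rintro ⟨_ | ⟨c, r⟩, hr⟩
    · have hbot : ⊥ ∈ rankHead m SA i := by
        rw [← List.append_nil (rankHead m SA i), hr, ha]
        simp
      exact absurd rfl (ne_bot_of_mem_sepHead hbot)
    · obtain rfl : c = ⊥ := by
        by_contra hc
        have hlt : m.drop (SA i) < m.drop (SA (i - 1)) := by
          rw [hb, ← hr]
          exact List.append_left_lt (List.Lex.rel (WithBot.bot_lt_iff_ne_bot.mpr hc))
        rw [hSA.drop_lt_drop_iff hi (by omega)] at hlt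
        omega
      exact (congrArg sepHead hr).symm.trans (sepHead_sepHead_append_bot _ _)
  · intro h
    exact ⟨⊥ :: a, by rw [ha, h]⟩

theorem mem_DecompBWT_iff {u : ℕ × ℕ} :
    u ∈ DecompBWT m SA ↔ IsMaxRun (rankHead m SA) m.length u := by
  simp only [DecompBWT, IsMaxRun, Set.mem_ofPred_eq]
  refine and_congr_right fun h12 => and_congr_right fun h2 => and_congr ?_ (and_congr ?_ ?_)
  · refine forall_congr' fun k => imp_congr_right fun hk1 => imp_congr_right fun hk2 => ?_
    exact lcpP_eq_lrs_iff_s2 hSA hm (by omega) (by omega)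
  · refine or_congr_right' fun h0 => not_congr ?_
    exact lcpP_eq_lrs_iff_s2 hSA hm (by omega) (by omega)
  · refine or_congr_right' fun hN => not_congr ?_
    rw [lcpP_eq_lrs_iff_s2 hSA hm (by omega) (by omega), Nat.add_sub_cancel]

theorem decPre_injOn : Set.InjOn (decPre m SA) (DecompBWT m SA) := fun u hu v hv h =>
  ((mem_DecompBWT_iff hSA hm).mp hu).eq_of_apply_eq (hasConvexFibres_rankHead hSA hm)
    ((mem_DecompBWT_iff hSA hm).mp hv) (by simpa [decPre_eq_reverse_rankHead] using h)

theorem image_decPre_DecompBWT :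
    decPre m SA '' DecompBWT m SA = {q | ∃ p < m.length, sepHead (m.drop p) = q.reverse} := by
  ext q
  simp only [Set.mem_image, Set.mem_ofPred_eq, decPre_eq_reverse_rankHead]
  constructor
  · rintro ⟨u, hu, rfl⟩
    have hu' := (mem_DecompBWT_iff hSA hm).mp hu
    exact ⟨SA u.1, hSA.SA_lt (lt_of_le_of_lt hu'.1 hu'.2.1), by simp [rankHead]⟩
  · rintro ⟨p, hp, hq⟩
    obtain ⟨u, hu, h1, h2⟩ :=
      exists_isMaxRun (hasConvexFibres_rankHead hSA hm) (hSA.rankOf_lt hp)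
    refine ⟨u, (mem_DecompBWT_iff hSA hm).mpr hu, ?_⟩
    rw [← hu.apply_eq h1 h2, rankHead, hSA.SA_rankOf hp, hq, List.reverse_reverse]

end Heads

section MultiString

theorem getLast?_mP (P : OSS α) : (mP P).getLast? = some ⊥ := by
  rw [mP, ← List.dropLast_append_getLast P.strs_ne]
  simp

theorem drop_map_sym_append_bot (t : List α) (l : List (WithBot α)) (q : ℕ) :
    (t.map sym ++ ⊥ :: l).drop (t.length + 1 + q) = l.drop q := by
  rw [← List.singleton_append, ← List.append_assoc,
    show t.length + 1 + q = (t.map sym ++ [⊥]).length + q by simp, List.drop_length_add_append]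

variable [LinearOrder α]

theorem sepHead_drop_map_sym_append {t : List α} {p : ℕ} (hp : p ≤ t.length)
    (l : List (WithBot α)) : sepHead ((t.map sym ++ ⊥ :: l).drop p) = (t.map sym).drop p := by
  rw [List.drop_append_of_le_length (by simpa using hp)]
  refine sepHead_append_bot (fun x hx => ?_) l
  obtain ⟨a, -, rfl⟩ := List.mem_map.mp (List.mem_of_mem_drop hx)
  exact WithBot.coe_ne_bot

theorem exists_sepHead_drop_flatten_iff (ts : List (List α)) (s : List (WithBot α)) :
    (∃ p < ((ts.map fun t => t.map sym ++ [⊥]).flatten).length,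
        sepHead (((ts.map fun t => t.map sym ++ [⊥]).flatten).drop p) = s) ↔
      ∃ t ∈ ts, s <:+ t.map sym := by
  induction ts with
  | nil => simp
  | cons t ts ih =>
    simp only [List.map_cons, List.flatten_cons, List.mem_cons, exists_eq_or_imp, ← ih,
      List.append_assoc, List.singleton_append, List.length_append, List.length_cons,
      List.length_map]
    constructor
    · rintro ⟨p, hp, rfl⟩
      by_cases hpt : p ≤ t.length
      · exact .inl (sepHead_drop_map_sym_append hpt _ ▸ List.drop_suffix _ _)
      · refine .inr ⟨p - (t.length + 1), by omega, ?_⟩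
        obtain ⟨q, rfl⟩ := Nat.exists_eq_add_of_lt (not_le.mp hpt)
        rw [add_right_comm, drop_map_sym_append_bot, Nat.add_sub_cancel_left]
    · rintro (hs | ⟨q, hq, rfl⟩)
      · refine ⟨t.length - s.length, by omega, ?_⟩
        rw [sepHead_drop_map_sym_append (by omega)]
        simpa using (List.suffix_iff_eq_drop.mp hs).symm
      · refine ⟨t.length + 1 + q, by omega, ?_⟩
        rw [drop_map_sym_append_bot]

theorem revPrefixes_eq (P : OSS α) :
    revPrefixes P = {q | ∃ p < (mP P).length, sepHead ((mP P).drop p) = q.reverse} := by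
  ext q
  rw [Set.mem_ofPred_eq, mP, exists_sepHead_drop_flatten_iff]
  simp only [revPrefixes, Set.mem_ofPred_eq, List.map_reverse, ← List.reverse_prefix,
    List.reverse_reverse]

end MultiString

section LastToFirst

theorem SA_ne_zero_of_bwtArr_ne_bot {m : List (WithBot α)} {SA : ℕ → ℕ} {k : ℕ}
    (h : bwtArr m SA k ≠ ⊥) : SA k ≠ 0 := by
  intro h0
  simp [bwtArr, h0] at h

variable [LinearOrder α] {m : List (WithBot α)} {SA : ℕ → ℕ} {j k x : ℕ}

theorem drop_pred_SA_eq_bwtArr_cons (hSA : IsSuffixArray m SA) (hk : k < m.length)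
    (h0 : SA k ≠ 0) : m.drop (SA k - 1) = bwtArr m SA k :: m.drop (SA k) := by
  rw [drop_eq_getD_cons ⊥ (by have := hSA.SA_lt hk; omega), Nat.sub_add_cancel (by omega), bwtArr,
    if_neg h0]

theorem drop_SA_eq_letterArr_cons (hSA : IsSuffixArray m SA) (hk : k < m.length) :
    m.drop (SA k) = letterArr m SA k :: m.drop (SA k + 1) :=
  drop_eq_getD_cons ⊥ (hSA.SA_lt hk)

theorem letterArr_mono (hSA : IsSuffixArray m SA) (hjk : j ≤ k) (hk : k < m.length) :
    letterArr m SA j ≤ letterArr m SA k := by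
  rcases hjk.eq_or_lt with rfl | hlt
  · exact le_rfl
  · have h := (hSA.drop_lt_drop_iff (hlt.trans hk) hk).mpr hlt
    rw [drop_SA_eq_letterArr_cons hSA (hlt.trans hk), drop_SA_eq_letterArr_cons hSA hk,
      List.cons_lt_cons_iff] at h
    rcases h with h | ⟨h, -⟩
    exacts [h.le, h.le]

theorem Cfun_eq_card_letterArr_lt (hSA : IsSuffixArray m SA) (c : WithBot α) :
    Cfun m c = ((Finset.range m.length).filter (fun i => letterArr m SA i < c)).card := by
  rw [Cfun, length_filter_eq_card m ⊥]
  refine Finset.card_nbij' (rankOf m SA) SA (fun p hp => ?_) (fun i hi => ?_)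
    (fun p hp => ?_) (fun i hi => ?_)
  · simp only [Finset.coe_filter, Finset.mem_range, decide_eq_true_eq, Set.mem_ofPred_eq] at hp ⊢
    exact ⟨hSA.rankOf_lt hp.1, by rw [letterArr, hSA.SA_rankOf hp.1]; exact hp.2⟩
  · simp only [Finset.coe_filter, Finset.mem_range, decide_eq_true_eq, Set.mem_ofPred_eq] at hi ⊢
    exact ⟨hSA.SA_lt hi.1, hi.2⟩
  · simp only [Finset.coe_filter, Finset.mem_range, Set.mem_ofPred_eq] at hp
    exact hSA.SA_rankOf hp.1
  · simp only [Finset.coe_filter, Finset.mem_range, Set.mem_ofPred_eq] at hi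
    exact hSA.rankOf_SA hi.1

theorem Cfun_add_card_letterArr_eq (hSA : IsSuffixArray m SA) {y : ℕ} (hy : y < m.length) :
    Cfun m (letterArr m SA y) +
      ((Finset.range y).filter (fun j => letterArr m SA j = letterArr m SA y)).card = y := by
  set c := letterArr m SA y
  have hlt : (Finset.range y).filter (fun j => letterArr m SA j < c) =
      (Finset.range m.length).filter (fun j => letterArr m SA j < c) := by
    ext j
    simp only [Finset.mem_filter, Finset.mem_range]
    refine ⟨fun h => ⟨by omega, h.2⟩, fun h => ⟨?_, h.2⟩⟩
    by_contra! hyj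
    exact (letterArr_mono hSA hyj h.1).not_gt h.2
  have hge : (Finset.range y).filter (fun j => ¬ letterArr m SA j < c) =
      (Finset.range y).filter (fun j => letterArr m SA j = c) := by
    refine Finset.filter_congr fun j hj => ?_
    have := letterArr_mono hSA (Finset.mem_range.mp hj).le hy
    constructor <;> intro h <;> order
  rw [Cfun_eq_card_letterArr_lt hSA, ← hlt, ← hge, Finset.card_filter_add_card_filter_not,
    Finset.card_range]

variable (hSA : IsSuffixArray m SA) (hm : m.getLast? = some ⊥)
include hSA

theorem letterArr_rankOf_pred (hk : k < m.length) (h0 : SA k ≠ 0) :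
    rankOf m SA (SA k - 1) < m.length ∧
      letterArr m SA (rankOf m SA (SA k - 1)) = bwtArr m SA k := by
  have hp : SA k - 1 < m.length := by have := hSA.SA_lt hk; omega
  refine ⟨hSA.rankOf_lt hp, ?_⟩
  rw [letterArr, hSA.SA_rankOf hp, bwtArr, if_neg h0]

include hm in
theorem bwtArr_rankOf_succ (hj : j < m.length) (hc : letterArr m SA j ≠ ⊥) :
    rankOf m SA (SA j + 1) < m.length ∧ SA (rankOf m SA (SA j + 1)) = SA j + 1 ∧
      bwtArr m SA (rankOf m SA (SA j + 1)) = letterArr m SA j := by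
  have hp : SA j + 1 < m.length := by
    obtain ⟨l, rfl⟩ := List.getLast?_eq_some_iff.mp hm
    have := hSA.SA_lt hj
    refine lt_of_le_of_ne this fun h => hc ?_
    simp [letterArr, show SA j = l.length by simp at h; omega]
  have hSA' := hSA.SA_rankOf hp
  refine ⟨hSA.rankOf_lt hp, hSA', ?_⟩
  rw [bwtArr, hSA', if_neg (by omega), Nat.add_sub_cancel]
  rfl

include hm in
theorem card_bwtArr_eq_card_letterArr_eq (hx : x < m.length) (hb : bwtArr m SA x ≠ ⊥) :
    ((Finset.range x).filter (fun k => bwtArr m SA k = bwtArr m SA x)).card =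
      ((Finset.range (rankOf m SA (SA x - 1))).filter
        (fun j => letterArr m SA j = bwtArr m SA x)).card := by
  set c := bwtArr m SA x
  have hx0 := SA_ne_zero_of_bwtArr_ne_bot hb
  have hxN := hSA.SA_lt hx
  have hyN := (letterArr_rankOf_pred hSA hx hx0).1
  have hdropy : m.drop (SA (rankOf m SA (SA x - 1))) = c :: m.drop (SA x) := by
    rw [hSA.SA_rankOf (by omega), drop_pred_SA_eq_bwtArr_cons hSA hx hx0]
  -- Extending suffixes by the same symbol `c` on the left preserves their order.
  refine Finset.card_nbij' (fun k => rankOf m SA (SA k - 1)) (fun j => rankOf m SA (SA j + 1))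
    (fun k hk => ?_) (fun j hj => ?_) (fun k hk => ?_) (fun j hj => ?_)
  · simp only [Finset.coe_filter, Finset.mem_range, Set.mem_ofPred_eq] at hk ⊢
    obtain ⟨hkx, hkc⟩ := hk
    have hk0 : SA k ≠ 0 := SA_ne_zero_of_bwtArr_ne_bot (hkc ▸ hb)
    have hkN := hSA.SA_lt (hkx.trans hx)
    obtain ⟨hjN, hjc⟩ := letterArr_rankOf_pred hSA (hkx.trans hx) hk0
    refine ⟨?_, hjc.trans hkc⟩
    rw [← hSA.drop_lt_drop_iff hjN hyN, hdropy, hSA.SA_rankOf (by omega),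
      drop_pred_SA_eq_bwtArr_cons hSA (hkx.trans hx) hk0, hkc, List.cons_lt_cons_iff]
    exact .inr ⟨rfl, (hSA.drop_lt_drop_iff (hkx.trans hx) hx).mpr hkx⟩
  · simp only [Finset.coe_filter, Finset.mem_range, Set.mem_ofPred_eq] at hj ⊢
    obtain ⟨hjy, hjc⟩ := hj
    have hjN := hjy.trans hyN
    obtain ⟨hkN, hSAk, hkc⟩ := bwtArr_rankOf_succ hSA hm hjN (hjc ▸ hb)
    refine ⟨?_, hkc.trans hjc⟩
    have := (hSA.drop_lt_drop_iff hjN hyN).mpr hjy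
    rw [hdropy, drop_SA_eq_letterArr_cons hSA hjN, hjc, List.cons_lt_cons_iff, ← hSAk,
      hSA.drop_lt_drop_iff hkN hx] at this
    exact (this.resolve_left (lt_irrefl c)).2
  · simp only [Finset.coe_filter, Finset.mem_range, Set.mem_ofPred_eq] at hk
    have hk0 : SA k ≠ 0 := SA_ne_zero_of_bwtArr_ne_bot (hk.2 ▸ hb)
    have hkN := hSA.SA_lt (hk.1.trans hx)
    dsimp only
    rw [hSA.SA_rankOf (by omega), Nat.sub_add_cancel (by omega), hSA.rankOf_SA (hk.1.trans hx)]
  · simp only [Finset.coe_filter, Finset.mem_range, Set.mem_ofPred_eq] at hj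
    have hjN := hj.1.trans hyN
    dsimp only
    rw [(bwtArr_rankOf_succ hSA hm hjN (hj.2 ▸ hb)).2.1, Nat.add_sub_cancel, hSA.rankOf_SA hjN]

include hm in
theorem LF_eq_rankOf (hx : x < m.length) (hb : bwtArr m SA x ≠ ⊥) :
    LF m SA x = rankOf m SA (SA x - 1) := by
  obtain ⟨hyN, hyc⟩ := letterArr_rankOf_pred hSA hx (SA_ne_zero_of_bwtArr_ne_bot hb)
  rw [LF, length_filter_range]
  simp only [decide_eq_true_eq]
  rw [card_bwtArr_eq_card_letterArr_eq hSA hm hx hb, ← hyc, Cfun_add_card_letterArr_eq hSA hyN]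

end LastToFirst

section Arcs
variable [LinearOrder α] {m : List (WithBot α)} {SA : ℕ → ℕ} {j x : ℕ}
variable (hSA : IsSuffixArray m SA) (hm : m.getLast? = some ⊥)
include hSA hm

theorem rankHead_LF (hx : x < m.length) (hb : bwtArr m SA x ≠ ⊥) :
    LF m SA x < m.length ∧ rankHead m SA (LF m SA x) = bwtArr m SA x :: rankHead m SA x := by
  have hx0 := SA_ne_zero_of_bwtArr_ne_bot hb
  have hp : SA x - 1 < m.length := by have := hSA.SA_lt hx; omega
  rw [LF_eq_rankOf hSA hm hx hb]
  refine ⟨hSA.rankOf_lt hp, ?_⟩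
  rw [rankHead, hSA.SA_rankOf hp, drop_pred_SA_eq_bwtArr_cons hSA hx hx0,
    sepHead_cons_of_ne_bot hb]
  rfl

theorem exists_LF_eq_of_rankHead_eq_cons (hj : j < m.length) {c : WithBot α}
    {s : List (WithBot α)} (h : rankHead m SA j = c :: s) :
    ∃ x < m.length, bwtArr m SA x ≠ ⊥ ∧ LF m SA x = j ∧ rankHead m SA x = s := by
  have hj' : letterArr m SA j ≠ ⊥ := by
    intro hbot
    rw [rankHead, drop_SA_eq_letterArr_cons hSA hj, hbot] at h
    simp [sepHead] at h
  rw [rankHead, drop_SA_eq_letterArr_cons hSA hj, sepHead_cons_of_ne_bot hj',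
    List.cons.injEq] at h
  obtain ⟨hxN, hSAx, hbx⟩ := bwtArr_rankOf_succ hSA hm hj hj'
  have hb : bwtArr m SA (rankOf m SA (SA j + 1)) ≠ ⊥ := hbx ▸ hj'
  refine ⟨_, hxN, hb, ?_, ?_⟩
  · rw [LF_eq_rankOf hSA hm hxN hb, hSAx, Nat.add_sub_cancel, hSA.rankOf_SA hj]
  · rw [rankHead, hSAx, ← h.2]

theorem mem_AT_iff {u v : ℕ × ℕ} (hu : u ∈ DecompBWT m SA) (hv : v ∈ DecompBWT m SA) :
    (u, v) ∈ AT m SA ↔ ∃ c, rankHead m SA v.1 = c :: rankHead m SA u.1 := by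
  have hf := hasConvexFibres_rankHead hSA hm
  have hu' := (mem_DecompBWT_iff hSA hm).mp hu
  have hv' := (mem_DecompBWT_iff hSA hm).mp hv
  simp only [AT, Set.mem_ofPred_eq, hu, hv, true_and]
  constructor
  · rintro ⟨x, hx1, hx2, hb, hv1, hv2⟩
    obtain ⟨hxN, hxu⟩ := (hu'.mem_iff hf).mp ⟨hx1, hx2⟩
    obtain ⟨-, hLFv⟩ := (hv'.mem_iff hf).mp ⟨hv1, hv2⟩
    exact ⟨bwtArr m SA x, by rw [← hLFv, (rankHead_LF hSA hm hxN hb).2, hxu]⟩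
  · rintro ⟨c, hc⟩
    obtain ⟨x, hxN, hb, hLF, hx⟩ :=
      exists_LF_eq_of_rankHead_eq_cons hSA hm (lt_of_le_of_lt hv'.1 hv'.2.1) hc
    obtain ⟨hx1, hx2⟩ := (hu'.mem_iff hf).mpr ⟨hxN, hx⟩
    exact ⟨x, hx1, hx2, hb, hLF ▸ le_rfl, hLF ▸ hv'.1⟩

end Arcs

theorem ACTedge_iff_of_prefix_closed {Pref : Set (List β)}
    (hPref : ∀ ⦃p q⦄, p <+: q → q ∈ Pref → p ∈ Pref) {p q : List β} (hp : p ∈ Pref)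
    (hq : q ∈ Pref) : ACTedge Pref p q ↔ ∃ c, q = p ++ [c] := by
  constructor
  · rintro ⟨-, -, hne, ⟨t, rfl⟩, hmax⟩
    obtain ⟨c, t, rfl⟩ : ∃ c t', t = c :: t' :=
      List.exists_cons_of_ne_nil (by rintro rfl; simp at hne)
    refine ⟨c, by_contra fun h => ?_⟩
    have hr : p ++ [c] <+: p ++ c :: t := by simp
    simpa using hmax _ (hPref hr hq) (Ne.symm h) hr
  · rintro ⟨c, rfl⟩
    refine ⟨hp, hq, by simp, List.prefix_append _ _, fun r _ hne hr => ?_⟩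
    have hlt : r.length < (p ++ [c]).length :=
      lt_of_le_of_ne hr.length_le fun h => hne (hr.eq_of_length h)
    simp only [List.length_append, List.length_singleton] at hlt
    omega

theorem AT_iso_ACT_general [LinearOrder α] (P : OSS α) (SA : ℕ → ℕ)
    (hSA : IsSuffixArray (mP P) SA) :
    Set.BijOn (decPre (mP P) SA) (DecompBWT (mP P) SA) (revPrefixes P) ∧
    ∀ u v : ℕ × ℕ, u ∈ DecompBWT (mP P) SA → v ∈ DecompBWT (mP P) SA →
      ((u, v) ∈ AT (mP P) SA ↔
        ACTedge (revPrefixes P) (decPre (mP P) SA u) (decPre (mP P) SA v)) := by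
  have hm := getLast?_mP P
  have himage : decPre (mP P) SA '' DecompBWT (mP P) SA = revPrefixes P :=
    (image_decPre_DecompBWT hSA hm).trans (revPrefixes_eq P).symm
  have hPref : ∀ ⦃p q⦄, p <+: q → q ∈ revPrefixes P → p ∈ revPrefixes P :=
    fun _ _ hpq ⟨t, ht, hq⟩ => ⟨t, ht, hpq.trans hq⟩
  refine ⟨himage ▸ (decPre_injOn hSA hm).bijOn_image, fun u v hu hv => ?_⟩
  rw [mem_AT_iff hSA hm hu hv, ACTedge_iff_of_prefix_closed hPref (himage ▸ ⟨u, hu, rfl⟩)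
    (himage ▸ ⟨v, hv, rfl⟩), decPre_eq_reverse_rankHead, decPre_eq_reverse_rankHead]
  exact exists_congr fun c => by rw [← List.reverse_cons, List.reverse_inj]

/-- `(u,v) ∈ A_T(P)` iff `Dec_Pre[u]` is the longest proper prefix of
`Dec_Pre[v]` among the elements of `Prefix(←P.S)`; consequently (together with the
bijectivity of `Dec_Pre`) the graph `(Decomp_BWT(P), A_T(P))` is isomorphic, via
`Dec_Pre`, to the Aho–Corasick tree `ACT(←P.S)`. -/
theorem AT_iso_ACT [Fintype α] [LinearOrder α] (P : OSS α) (SA : ℕ → ℕ)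
    (hSA : IsSuffixArray (mP P) SA) :
    Set.BijOn (decPre (mP P) SA) (DecompBWT (mP P) SA) (revPrefixes P) ∧
    ∀ u v : ℕ × ℕ, u ∈ DecompBWT (mP P) SA → v ∈ DecompBWT (mP P) SA →
      ((u, v) ∈ AT (mP P) SA ↔
        ACTedge (revPrefixes P) (decPre (mP P) SA u) (decPre (mP P) SA v)) :=
  AT_iso_ACT_general P SA hSA

end BwtXbw
end

section
/- Let P be an ordered set of strings, let u = [i,j] and w be two distinct elements of Decomp_BWT(P). Then there exists k ∈ w with k < i and LRS(P)[k] ≤ LCP(P)[l] for all l ∈ [k+1, i] if and only if Dec_Pre[w] is a proper suffix of Dec_Pre[u]. -/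
namespace BwtXbw

variable {α β : Type*}

section AuxListLemmas
variable {γ : Type*} [LinearOrder γ]
set_option linter.unusedSectionVars false

lemma lex_asymm : ∀ {a b : List γ}, List.Lex (·<·) a b → List.Lex (·<·) b a → False
  | _, _, List.Lex.nil, h' => by cases h'
  | _, _, List.Lex.cons h, h' => by
      cases h' with
      | cons h'' => exact lex_asymm h h''
      | rel h'' => exact lt_irrefl _ h''
  | _, _, List.Lex.rel h, h' => by
      cases h' with
      | cons => exact lt_irrefl _ h
      | rel h'' => exact lt_asymm h h''

lemma lex_irrefl {a : List γ} (h : List.Lex (·<·) a a) : False := lex_asymm h h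

lemma lex_append_left {a b : List γ} (p : List γ) (h : List.Lex (·<·) a b) :
    List.Lex (·<·) (p ++ a) (p ++ b) := by
  induction p with
  | nil => simpa
  | cons x t ih => exact List.Lex.cons ih

lemma lex_of_lex_append {a b : List γ} (p : List γ)
    (h : List.Lex (·<·) (p ++ a) (p ++ b)) : List.Lex (·<·) a b := by
  induction p with
  | nil => simpa using h
  | cons x t ih =>
    cases h with
    | cons h => exact ih h
    | rel h => exact absurd h (lt_irrefl x)

lemma lex_sandwich : ∀ (p a b c : List γ), p <+: a → p <+: c →
    List.Lex (·<·) a b → List.Lex (·<·) b c → p <+: b := by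
  intro p
  induction p with
  | nil => intro _ _ _ _ _ _ _; exact List.nil_prefix
  | cons x p ih =>
    rintro a b c ⟨a', rfl⟩ ⟨c', rfl⟩ hab hbc
    simp only [List.cons_append] at hab hbc
    cases hab with
    | rel h =>
      cases hbc with
      | rel h' => exact absurd (lt_trans h h') (lt_irrefl x)
      | cons h' => exact absurd h (lt_irrefl x)
    | cons h =>
      cases hbc with
      | rel h' => exact absurd h' (lt_irrefl x)
      | cons h' =>
        obtain ⟨r, hr⟩ := ih _ _ _ ⟨a', rfl⟩ ⟨c', rfl⟩ h h'
        exact ⟨r, by rw [List.cons_append, hr]⟩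

lemma lcpLen_comm : ∀ a b : List γ, lcpLen a b = lcpLen b a
  | [], [] => rfl
  | [], _ :: _ => rfl
  | _ :: _, [] => rfl
  | a :: s, b :: t => by
    by_cases h : a = b
    · subst h; simp [lcpLen, lcpLen_comm s t]
    · simp [lcpLen, h, Ne.symm h]

lemma le_lcpLen_of_prefix : ∀ (p a b : List γ), p <+: a → p <+: b →
    p.length ≤ lcpLen a b := by
  intro p
  induction p with
  | nil => simp
  | cons x p ih =>
    rintro a b ⟨a', rfl⟩ ⟨b', rfl⟩
    simpa [lcpLen] using ih _ _ ⟨a', rfl⟩ ⟨b', rfl⟩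

lemma prefix_of_le_lcpLen : ∀ (p a b : List γ), p <+: a →
    p.length ≤ lcpLen a b → p <+: b := by
  intro p
  induction p with
  | nil => intro _ b _ _; exact List.nil_prefix
  | cons x p ih =>
    rintro a b ⟨a', rfl⟩ hlen
    cases b with
    | nil => simp [lcpLen] at hlen
    | cons y b' =>
      by_cases hxy : x = y
      · subst hxy
        rw [List.cons_append] at hlen
        have hlen' : p.length ≤ lcpLen (p ++ a') b' := by simpa [lcpLen] using hlen
        obtain ⟨r, hr⟩ := ih _ _ ⟨a', rfl⟩ hlen'
        exact ⟨r, by rw [List.cons_append, hr]⟩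
      · simp [lcpLen, List.cons_append, hxy] at hlen

lemma takeWhile_app (Q : γ → Bool) (p r : List γ) (hp : ∀ x ∈ p, Q x = true) :
    (p ++ r).takeWhile Q = p ++ r.takeWhile Q := by
  induction p with
  | nil => simp
  | cons x t ih =>
    simp only [List.cons_append, List.takeWhile_cons, hp x (by simp),
      ih (fun y hy => hp y (by simp [hy]))]
    simp

lemma dropWhile_head_false (Q : γ → Bool) : ∀ (l : List γ) (h : γ) (t : List γ),
    l.dropWhile Q = h :: t → Q h = false := by
  intro l
  induction l with
  | nil => intro h t hd; simp at hd
  | cons x xs ih =>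
    intro h t hd
    by_cases hx : Q x = true
    · rw [List.dropWhile_cons_of_pos hx] at hd; exact ih _ _ hd
    · rw [List.dropWhile_cons_of_neg hx] at hd
      cases hd; simpa using hx

end AuxListLemmas

section AuxM
variable [LinearOrder α]

/-- Auxiliary: the run of non-separator symbols starting at `SA p`. -/
def strAt (m : List (WithBot α)) (SA : ℕ → ℕ) (p : ℕ) : List (WithBot α) :=
  (m.drop (SA p)).takeWhile (fun c => decide (c ≠ ⊥))

lemma lrs_eq_strAt (m : List (WithBot α)) (SA : ℕ → ℕ) (p : ℕ) :
    lrs m SA p = (strAt m SA p).length := rfl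

lemma strAt_prefix (m : List (WithBot α)) (SA : ℕ → ℕ) (p : ℕ) :
    strAt m SA p <+: m.drop (SA p) := List.takeWhile_prefix _

lemma strAt_no_bot {m : List (WithBot α)} {SA : ℕ → ℕ} {p : ℕ} {x : WithBot α}
    (hx : x ∈ strAt m SA p) : x ≠ ⊥ := by
  have := List.mem_takeWhile_imp hx
  simpa using this

lemma mP_concat (P : OSS α) : ∃ t : List (WithBot α), mP P = t ++ [⊥] := by
  have h := P.strs_ne
  obtain ⟨s, l, hsl⟩ : ∃ s l, P.strs = l ++ [s] := by
    refine ⟨P.strs.getLast h, P.strs.dropLast, ?_⟩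
    exact (List.dropLast_append_getLast h).symm
  refine ⟨((l.map (fun s => s.map sym ++ [⊥])).flatten) ++ s.map sym, ?_⟩
  rw [mP, hsl]
  simp

lemma bot_mem_drop (P : OSS α) {p : ℕ} (hp : p < (mP P).length) :
    (⊥ : WithBot α) ∈ (mP P).drop p := by
  obtain ⟨t, ht⟩ := mP_concat P
  rw [ht] at hp ⊢
  simp only [List.length_append, List.length_singleton] at hp
  rw [List.drop_append_of_le_length (by omega)]
  simp

lemma suf_eq (P : OSS α) (SA : ℕ → ℕ) {p : ℕ} (hp : SA p < (mP P).length) :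
    ∃ r, (mP P).drop (SA p) = strAt (mP P) SA p ++ ⊥ :: r := by
  have hb : (⊥ : WithBot α) ∈ (mP P).drop (SA p) := bot_mem_drop P hp
  have hsplit := List.takeWhile_append_dropWhile
    (p := fun c : WithBot α => decide (c ≠ ⊥)) (l := (mP P).drop (SA p))
  cases hdw : ((mP P).drop (SA p)).dropWhile (fun c : WithBot α => decide (c ≠ ⊥)) with
  | nil =>
    rw [hdw, List.append_nil] at hsplit
    exact absurd rfl (strAt_no_bot (p := p) (by unfold strAt; rw [hsplit]; exact hb))
  | cons c r =>
    have hc : c = ⊥ := by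
      have := dropWhile_head_false _ _ _ _ hdw
      simpa using this
    exact ⟨r, by rw [← hsplit, hdw, hc]; rfl⟩

lemma idx_lt_of_lex {m : List (WithBot α)} {SA : ℕ → ℕ} (hSA : IsSuffixArray m SA)
    {i j : ℕ} (hi : i < m.length) (hj : j < m.length)
    (h : List.Lex (·<·) (m.drop (SA i)) (m.drop (SA j))) : i < j := by
  rcases lt_trichotomy i j with h' | rfl | h'
  · exact h'
  · exact absurd h lex_irrefl
  · exact absurd (hSA.2 j i h' hi) (fun h2 => lex_asymm h h2)

lemma str_pred_eq (P : OSS α) {SA : ℕ → ℕ} (hSA : IsSuffixArray (mP P) SA)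
    {l : ℕ} (hl0 : 0 < l) (hlN : l < (mP P).length)
    (heq : lcpP (mP P) SA l = lrs (mP P) SA l) :
    strAt (mP P) SA (l - 1) = strAt (mP P) SA l := by
  set m := mP P with hm
  have hmaps : ∀ p, p < m.length → SA p < m.length :=
    fun p hp => hSA.1.1 (Set.mem_Iio.mpr hp)
  have hl1N : l - 1 < m.length := lt_of_le_of_lt (Nat.sub_le l 1) hlN
  have hle : lrs m SA l ≤ lcpLen (m.drop (SA (l - 1))) (m.drop (SA l)) := by
    rw [lcpP, if_neg (Nat.pos_iff_ne_zero.mp hl0)] at heq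
    exact min_eq_right_iff.mp heq
  have hpre : strAt m SA l <+: m.drop (SA (l - 1)) := by
    refine prefix_of_le_lcpLen _ _ _ (strAt_prefix m SA l) ?_
    rw [lcpLen_comm, ← lrs_eq_strAt]
    exact hle
  obtain ⟨rest, hrest⟩ := hpre
  obtain ⟨r2, hr2⟩ := suf_eq P SA (hmaps l hlN)
  have hlex := hSA.2 (l - 1) l (Nat.sub_lt hl0 one_pos) hlN
  have hbot : (⊥ : WithBot α) ∈ strAt m SA l ++ rest := by
    rw [hrest]; exact bot_mem_drop P (hmaps _ hl1N)
  cases rest with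
  | nil =>
    rw [List.append_nil] at hbot
    exact absurd rfl (strAt_no_bot hbot)
  | cons c rest' =>
    have hcbot : c = ⊥ := by
      rw [← hrest, hr2] at hlex
      have := lex_of_lex_append _ hlex
      cases this with
      | rel h => exact absurd h not_lt_bot
      | cons h => rfl
    subst hcbot
    rw [strAt, ← hrest, takeWhile_app _ _ _ (fun x hx => by
      simpa using strAt_no_bot hx)]
    simp

lemma str_interval (P : OSS α) {SA : ℕ → ℕ} (hSA : IsSuffixArray (mP P) SA)
    {v : ℕ × ℕ} (hv : v ∈ DecompBWT (mP P) SA) :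
    ∀ l, v.1 ≤ l → l ≤ v.2 → strAt (mP P) SA l = strAt (mP P) SA v.1 := by
  intro l hl
  induction l, hl using Nat.le_induction with
  | base => intro _; rfl
  | succ l hl ih =>
    intro hl2
    have heq := hv.2.2.1 (l + 1) (Nat.lt_succ_of_le hl) hl2
    have := str_pred_eq P hSA (Nat.succ_pos l) (lt_of_le_of_lt hl2 hv.2.1) heq
    rw [← this]
    exact ih (Nat.le_of_succ_le hl2)

lemma decPre_eq_strAt (m : List (WithBot α)) (SA : ℕ → ℕ) (v : ℕ × ℕ) :
    decPre m SA v = (strAt m SA v.1).reverse := by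
  rw [decPre, lrs_eq_strAt]
  congr 1
  exact (List.prefix_iff_eq_take.mp (strAt_prefix m SA v.1)).symm

end AuxM

/-- For distinct `u = [i,j]`, `w ∈ Decomp_BWT(P)`: there is `k ∈ w`
with `k < i` and `LRS[k] ≤ LCP[l]` for all `l ∈ [k+1, i]` iff `Dec_Pre[w]` is a proper
suffix of `Dec_Pre[u]`. -/
theorem failCand_iff_properSuffix [Fintype α] [LinearOrder α] (P : OSS α)
    (SA : ℕ → ℕ) (hSA : IsSuffixArray (mP P) SA)
    (u w : ℕ × ℕ) (hu : u ∈ DecompBWT (mP P) SA) (hw : w ∈ DecompBWT (mP P) SA)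
    (hne : u ≠ w) :
    (∃ k, w.1 ≤ k ∧ k ≤ w.2 ∧ k < u.1 ∧
        ∀ l, k < l → l ≤ u.1 → lrs (mP P) SA k ≤ lcpP (mP P) SA l) ↔
      (decPre (mP P) SA w <:+ decPre (mP P) SA u ∧
        decPre (mP P) SA w ≠ decPre (mP P) SA u) := by
  classical
  set m := mP P with hm
  have hmaps : ∀ p, p < m.length → SA p < m.length :=
    fun p hp => hSA.1.1 (Set.mem_Iio.mpr hp)
  have hu1N : u.1 < m.length := lt_of_le_of_lt hu.1 hu.2.1
  have hw1N : w.1 < m.length := lt_of_le_of_lt hw.1 hw.2.1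
  have hw2N : w.2 < m.length := hw.2.1
  set Sw := strAt m SA w.1 with hSw
  set Su := strAt m SA u.1 with hSu
  have hdec : (decPre m SA w <:+ decPre m SA u ∧ decPre m SA w ≠ decPre m SA u) ↔
      (Sw <+: Su ∧ Sw ≠ Su) := by
    rw [decPre_eq_strAt, decPre_eq_strAt, List.reverse_suffix, ne_eq,
      List.reverse_inj, ← ne_eq, ← hSw, ← hSu]
  rw [hdec]
  constructor
  · rintro ⟨k, hk1, hk2, hki, hcond⟩
    have hkN : k < m.length := lt_of_le_of_lt hk2 hw2N
    have hstrk : strAt m SA k = Sw := str_interval P hSA hw k hk1 hk2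
    have hlrsk : lrs m SA k = Sw.length := by rw [lrs_eq_strAt, hstrk]
    have hpref : ∀ l, k ≤ l → l ≤ u.1 → Sw <+: m.drop (SA l) := by
      intro l hl
      induction l, hl using Nat.le_induction with
      | base => intro _; rw [← hstrk]; exact strAt_prefix m SA k
      | succ l hl ih =>
        intro hl2
        have hprev := ih (Nat.le_of_succ_le hl2)
        have hc := hcond (l + 1) (Nat.lt_succ_of_le hl) hl2
        rw [lcpP, if_neg (Nat.succ_ne_zero l), hlrsk] at hc
        simp only [Nat.add_sub_cancel] at hc
        exact prefix_of_le_lcpLen _ _ _ hprev (le_trans hc (min_le_left _ _))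
    have hSwSu : Sw <+: Su := by
      obtain ⟨r, hr⟩ := hpref u.1 (le_of_lt hki) le_rfl
      rw [hSu, strAt, ← hr, takeWhile_app _ _ _ (fun x hx => by
        simpa using strAt_no_bot (hSw ▸ hx))]
      exact ⟨_, rfl⟩
    refine ⟨hSwSu, ?_⟩
    intro hSwEq
    have hw2u1 : w.2 < u.1 := by
      by_contra hge
      push_neg at hge
      have h01 : w.1 < u.1 := lt_of_le_of_lt hk1 hki
      have hint := hw.2.2.1 u.1 h01 hge
      rcases hu.2.2.2.1 with h0 | hne0
      · omega
      · exact hne0 hint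
    have hqle : w.2 + 1 ≤ u.1 := hw2u1
    have hqN : w.2 + 1 < m.length := lt_of_le_of_lt hqle hu1N
    have hstrw2 : strAt m SA w.2 = Sw := str_interval P hSA hw w.2 hw.1 le_rfl
    obtain ⟨r1, hr1⟩ := suf_eq P SA (hmaps _ hw2N)
    rw [hstrw2] at hr1
    obtain ⟨r2, hr2⟩ := suf_eq P SA (hmaps _ hu1N)
    rw [show strAt m SA u.1 = Sw from (hSwEq ▸ rfl : Su = Sw)] at hr2
    have hp : Sw ++ [⊥] <+: m.drop (SA (w.2 + 1)) := by
      rcases eq_or_lt_of_le hqle with hq | hq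
      · rw [hq, hr2]
        exact ⟨r2, by simp⟩
      · refine lex_sandwich _ (m.drop (SA w.2)) _ (m.drop (SA u.1))
          ⟨r1, by rw [hr1]; simp⟩ ⟨r2, by rw [hr2]; simp⟩ ?_ ?_
        · exact hSA.2 w.2 (w.2 + 1) (Nat.lt_succ_self w.2) hqN
        · exact hSA.2 (w.2 + 1) u.1 hq hu1N
    obtain ⟨r3, hr3⟩ := hp
    have hstrq : strAt m SA (w.2 + 1) = Sw := by
      rw [strAt, ← hr3, List.append_assoc, List.singleton_append,
        takeWhile_app _ _ _ (fun x hx => by simpa using strAt_no_bot (hSw ▸ hx))]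
      simp
    have hlcp : Sw.length + 1 ≤ lcpLen (m.drop (SA w.2)) (m.drop (SA (w.2 + 1))) := by
      have h1 : Sw ++ [⊥] <+: m.drop (SA w.2) := ⟨r1, by rw [hr1]; simp⟩
      have := le_lcpLen_of_prefix (Sw ++ [⊥]) _ _ h1 ⟨r3, hr3⟩
      simpa using this
    have hcontra : lcpP m SA (w.2 + 1) = lrs m SA (w.2 + 1) := by
      rw [lcpP, if_neg (Nat.succ_ne_zero w.2)]
      simp only [Nat.add_sub_cancel]
      rw [lrs_eq_strAt, hstrq]
      exact min_eq_right (by omega)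
    rcases hw.2.2.2.2 with hNN | hne'
    · omega
    · exact hne' hcontra
  · rintro ⟨hSwSu, hSwne⟩
    obtain ⟨d, hd⟩ := hSwSu
    cases d with
    | nil => exact absurd (by rw [← hd, List.append_nil]) hSwne
    | cons c d' =>
      have hSwSu' : Sw <+: Su := ⟨c :: d', hd⟩
      have hcmem : c ∈ Su := by rw [← hd]; simp
      have hcbot : c ≠ ⊥ := strAt_no_bot (hSu ▸ hcmem)
      have hstrw2 : strAt m SA w.2 = Sw := str_interval P hSA hw w.2 hw.1 le_rfl
      obtain ⟨r1, hr1⟩ := suf_eq P SA (hmaps _ hw2N)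
      rw [hstrw2] at hr1
      obtain ⟨r2, hr2⟩ := suf_eq P SA (hmaps _ hu1N)
      rw [← hSu, ← hd, List.append_assoc, List.cons_append] at hr2
      have hlexwu : List.Lex (·<·) (m.drop (SA w.2)) (m.drop (SA u.1)) := by
        rw [hr1, hr2]
        exact lex_append_left Sw (List.Lex.rel (Ne.bot_lt hcbot))
      have hku : w.2 < u.1 := idx_lt_of_lex hSA hw2N hu1N hlexwu
      refine ⟨w.2, hw.1, le_rfl, hku, ?_⟩
      have hmid : ∀ x, w.2 ≤ x → x ≤ u.1 → Sw <+: m.drop (SA x) := by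
        intro x hx1 hx2
        rcases eq_or_lt_of_le hx1 with hxe | hxl
        · rw [← hxe, hr1]; exact ⟨_, rfl⟩
        rcases eq_or_lt_of_le hx2 with hxe | hxr
        · rw [hxe]
          exact hSwSu'.trans (strAt_prefix m SA u.1)
        · have hxN : x < m.length := lt_of_lt_of_le hxr (le_of_lt hu1N)
          refine lex_sandwich _ (m.drop (SA w.2)) _ (m.drop (SA u.1))
            ⟨⊥ :: r1, hr1.symm⟩ (hSwSu'.trans (strAt_prefix m SA u.1)) ?_ ?_
          · exact hSA.2 w.2 x hxl hxN
          · exact hSA.2 x u.1 hxr hu1N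
      intro l hl1 hl2
      have hSl : Sw <+: m.drop (SA l) := hmid l (le_of_lt hl1) hl2
      have hSl1 : Sw <+: m.drop (SA (l - 1)) := hmid (l - 1) (by omega) (by omega)
      rw [lcpP, if_neg (by omega : l ≠ 0), lrs_eq_strAt, hstrw2]
      refine le_min (le_lcpLen_of_prefix _ _ _ hSl1 hSl) ?_
      obtain ⟨r, hr⟩ := hSl
      rw [lrs_eq_strAt, strAt, ← hr, takeWhile_app _ _ _ (fun x hx => by
        simpa using strAt_no_bot (hSw ▸ hx))]
      simp

end BwtXbw
end
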